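/- arXiv:0910.0747 — 3 statements merged into one kernel-verified Lean document; each statement's English description precedes it below -/
import Mathlib

section
/- Reflexivity of algorithmic subtyping in System F<:: if the type T is well-formed in the context Γ, then Γ ⊢ T <: T. -/
inductive FTy : Type
  | tvar : ℕ → FTy
  | top : FTy
  | arr : FTy → FTy → FTy
  | all : FTy → FTy → FTy

def liftRen (ρ : ℕ → ℕ) : ℕ → ℕ
  | 0 => 0
  | n + 1 => ρ n + 1

/-- Apply a renaming to the free type variables of a type. -/
def tyRename (ρ : ℕ → ℕ) : FTy → FTy
  | FTy.tvar n => FTy.tvar (ρ n)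
  | FTy.top => FTy.top
  | FTy.arr a b => FTy.arr (tyRename ρ a) (tyRename ρ b)
  | FTy.all a b => FTy.all (tyRename ρ a) (tyRename (liftRen ρ) b)

/-- Shift all free type variables up by `k`. -/
def shiftUp (k : ℕ) : FTy → FTy := tyRename (· + k)

/-- Algorithmic subtyping for System F<:. -/
inductive Subty : List FTy → FTy → FTy → Prop
  | top {Γ : List FTy} {S : FTy} : Subty Γ S FTy.top
  | refl {Γ : List FTy} {i : ℕ} : i < Γ.length → Subty Γ (FTy.tvar i) (FTy.tvar i)
  | trans {Γ : List FTy} {i : ℕ} {U T : FTy} :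
      Γ[i]? = some U → Subty Γ (shiftUp (i + 1) U) T → Subty Γ (FTy.tvar i) T
  | arrow {Γ : List FTy} {S₁ S₂ T₁ T₂ : FTy} :
      Subty Γ T₁ S₁ → Subty Γ S₂ T₂ → Subty Γ (FTy.arr S₁ S₂) (FTy.arr T₁ T₂)
  | all {Γ : List FTy} {S₁ S₂ T₁ T₂ : FTy} :
      Subty Γ T₁ S₁ → Subty (T₁ :: Γ) S₂ T₂ → Subty Γ (FTy.all S₁ S₂) (FTy.all T₁ T₂)

/-- `WF n T` holds when every free type variable of `T` is less than `n`. -/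
def WF (n : ℕ) : FTy → Prop
  | FTy.tvar i => i < n
  | FTy.top => True
  | FTy.arr a b => WF n a ∧ WF n b
  | FTy.all a b => WF n a ∧ WF (n + 1) b

theorem sub_refl (Γ : List FTy) (T : FTy) (h : WF Γ.length T) : Subty Γ T T := by
  induction T generalizing Γ with
  | tvar i => exact Subty.refl h
  | top => exact Subty.top
  | arr dom cod ih_dom ih_cod => exact Subty.arrow (ih_dom Γ h.1) (ih_cod Γ h.2)
  | all bound body ih_bound ih_body =>
    exact Subty.all (ih_bound Γ h.1) (ih_body (bound :: Γ) h.2)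
end

section
/- Transitivity of algorithmic subtyping in System F<:: if Γ ⊢ S <: Q and Γ ⊢ Q <: T, then Γ ⊢ S <: T. -/
/-!
Transitivity and narrowing at a type `Q` are proved together by induction on the size of `Q`.
Transitivity at `arr Q₁ Q₂` or `all Q₁ Q₂` only needs transitivity at `Q₁`, `Q₂` and narrowing at
the bound `Q₁`. Narrowing a bound `Q` to `P <: Q` replaces each use of SA-Trans-TVar at that
variable by `P <: Q` followed by the old derivation, so it needs transitivity at a shifted copy
of `Q`; renaming does not change sizes, so that copy is still smaller than the type at hand.
-/

namespace FTy

def size : FTy → ℕ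
  | tvar _ => 1
  | top => 1
  | arr a b => a.size + b.size + 1
  | all a b => a.size + b.size + 1

theorem size_tyRename (ρ : ℕ → ℕ) : ∀ T, (tyRename ρ T).size = T.size
  | tvar _ => rfl
  | top => rfl
  | arr a b => by simp only [tyRename, size, size_tyRename ρ a, size_tyRename ρ b]
  | all a b => by simp only [tyRename, size, size_tyRename ρ a, size_tyRename (liftRen ρ) b]

theorem size_shiftUp (k : ℕ) (T : FTy) : (shiftUp k T).size = T.size :=
  size_tyRename _ T

end FTy

open FTy

theorem tyRename_congr {ρ σ : ℕ → ℕ} (h : ∀ n, ρ n = σ n) : ∀ T, tyRename ρ T = tyRename σ T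
  | tvar n => by rw [tyRename, tyRename, h]
  | top => rfl
  | arr a b => by rw [tyRename, tyRename, tyRename_congr h a, tyRename_congr h b]
  | all a b => by
      have h' : ∀ n, liftRen ρ n = liftRen σ n := by
        rintro (_ | n) <;> simp only [liftRen, h]
      rw [tyRename, tyRename, tyRename_congr h a, tyRename_congr h' b]

theorem tyRename_tyRename (σ τ : ℕ → ℕ) :
    ∀ T, tyRename σ (tyRename τ T) = tyRename (σ ∘ τ) T
  | tvar _ => rfl
  | top => rfl
  | arr a b => by rw [tyRename, tyRename, tyRename_tyRename σ τ a, tyRename_tyRename σ τ b]; rfl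
  | all a b => by
      rw [tyRename, tyRename, tyRename_tyRename σ τ a, tyRename_tyRename _ _ b, tyRename,
        tyRename_congr (σ := liftRen (σ ∘ τ)) (by rintro (_ | n) <;> rfl) b]

def IsCtxRenaming (ρ : ℕ → ℕ) (Γ Δ : List FTy) : Prop :=
  ∀ i U, Γ[i]? = some U →
    ∃ V, Δ[ρ i]? = some V ∧ shiftUp (ρ i + 1) V = tyRename ρ (shiftUp (i + 1) U)

theorem IsCtxRenaming.lift {ρ : ℕ → ℕ} {Γ Δ : List FTy} (h : IsCtxRenaming ρ Γ Δ)
    (A : FTy) : IsCtxRenaming (liftRen ρ) (A :: Γ) (tyRename ρ A :: Δ) := by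
  rintro (_ | i) U hU
  · obtain rfl : A = U := Option.some.inj hU
    refine ⟨tyRename ρ A, rfl, ?_⟩
    simp only [shiftUp, tyRename_tyRename]
    exact tyRename_congr (fun _ => rfl) A
  · obtain ⟨V, hV, hVU⟩ := h i U hU
    refine ⟨V, hV, ?_⟩
    have hshift : shiftUp (ρ i + 1 + 1) V = shiftUp 1 (shiftUp (ρ i + 1) V) := by
      simp only [shiftUp, tyRename_tyRename]
      exact tyRename_congr (fun _ => by simp only [Function.comp_apply]; omega) V
    rw [liftRen, hshift, hVU]
    simp only [shiftUp, tyRename_tyRename]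
    exact tyRename_congr (fun _ => rfl) U

theorem Subty.rename {Γ : List FTy} {S T : FTy} (h : Subty Γ S T) {ρ : ℕ → ℕ} {Δ : List FTy}
    (hρ : IsCtxRenaming ρ Γ Δ) : Subty Δ (tyRename ρ S) (tyRename ρ T) := by
  induction h generalizing ρ Δ with
  | top => exact .top
  | refl hi =>
    obtain ⟨V, hV, -⟩ := hρ _ _ (List.getElem?_eq_getElem hi)
    exact .refl (List.getElem?_eq_some_iff.mp hV).1
  | trans hU _ ih =>
    obtain ⟨V, hV, hVU⟩ := hρ _ _ hU
    exact .trans hV (hVU ▸ ih hρ)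
  | arrow _ _ ih₁ ih₂ => exact .arrow (ih₁ hρ) (ih₂ hρ)
  | all _ _ ih₁ ih₂ => exact .all (ih₁ hρ) (ih₂ (hρ.lift _))

theorem Subty.weaken {Γ : List FTy} {S T : FTy} (h : Subty Γ S T) (Δ : List FTy) :
    Subty (Δ ++ Γ) (shiftUp Δ.length S) (shiftUp Δ.length T) := by
  refine h.rename fun i U hU => ⟨U, ?_, ?_⟩
  · rw [List.getElem?_append_right (by omega), Nat.add_sub_cancel, hU]
  · simp only [shiftUp, tyRename_tyRename]
    exact tyRename_congr (fun _ => by simp only [Function.comp_apply]; omega) U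

theorem getElem?_append_cons_of_ne {α : Type*} {Δ l : List α} {i : ℕ} (a b : α)
    (hi : i ≠ Δ.length) : (Δ ++ a :: l)[i]? = (Δ ++ b :: l)[i]? := by
  rcases Nat.lt_or_gt_of_ne hi with hlt | hgt
  · rw [List.getElem?_append_left hlt, List.getElem?_append_left hlt]
  · obtain ⟨k, hk⟩ : ∃ k, i - Δ.length = k + 1 := ⟨i - Δ.length - 1, by omega⟩
    rw [List.getElem?_append_right hgt.le, List.getElem?_append_right hgt.le, hk,
      List.getElem?_cons_succ, List.getElem?_cons_succ]

def TransAt (Q : FTy) : Prop :=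
  ∀ {Γ : List FTy} {S T : FTy}, Subty Γ S Q → Subty Γ Q T → Subty Γ S T

def NarrowAt (Q : FTy) : Prop :=
  ∀ {Δ Γ : List FTy} {P M N : FTy},
    Subty (Δ ++ Q :: Γ) M N → Subty Γ P Q → Subty (Δ ++ P :: Γ) M N

theorem narrowAt_of_transAt {Q : FTy} (hQ : ∀ k, TransAt (shiftUp k Q)) : NarrowAt Q := by
  intro Δ Γ P M N h hPQ
  generalize hΓ : Δ ++ Q :: Γ = Γ' at h
  induction h generalizing Δ with
  | top => exact .top
  | refl hi =>
    subst hΓ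
    exact .refl (by simpa using hi)
  | @trans _ i U _ hU _ ih =>
    subst hΓ
    by_cases hi : i = Δ.length
    · subst hi
      obtain rfl : Q = U := by simpa using hU
      have hP : Subty (Δ ++ P :: Γ) (shiftUp (Δ.length + 1) P) (shiftUp (Δ.length + 1) Q) := by
        simpa using hPQ.weaken (Δ ++ [P])
      exact .trans (by simp) (hQ _ hP (ih rfl))
    · exact .trans ((getElem?_append_cons_of_ne Q P hi).symm.trans hU) (ih rfl)
  | arrow _ _ ih₁ ih₂ => exact .arrow (ih₁ hΓ) (ih₂ hΓ)
  | @all _ _ _ T₁ _ _ _ ih₁ ih₂ => exact .all (ih₁ hΓ) (ih₂ (Δ := T₁ :: Δ) (by rw [← hΓ]; rfl))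

theorem transAt_of_size_lt {Q : FTy}
    (hlt : ∀ R : FTy, R.size < Q.size → TransAt R ∧ NarrowAt R) : TransAt Q := by
  intro Γ S T h₁ h₂
  induction h₁ generalizing T with
  | top => cases h₂; exact .top
  | refl _ => exact h₂
  | trans hU _ ih => exact .trans hU (ih hlt h₂)
  | @arrow _ _ _ Q₁ Q₂ hQ₁S₁ hS₂Q₂ =>
    obtain ⟨htrans₁, -⟩ := hlt Q₁ (by simp only [size]; omega)
    obtain ⟨htrans₂, -⟩ := hlt Q₂ (by simp only [size]; omega)
    cases h₂ with
    | top => exact .top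
    | arrow hT₁Q₁ hQ₂T₂ => exact .arrow (htrans₁ hT₁Q₁ hQ₁S₁) (htrans₂ hS₂Q₂ hQ₂T₂)
  | @all _ _ _ Q₁ Q₂ hQ₁S₁ hS₂Q₂ =>
    obtain ⟨htrans₁, hnarrow₁⟩ := hlt Q₁ (by simp only [size]; omega)
    obtain ⟨htrans₂, -⟩ := hlt Q₂ (by simp only [size]; omega)
    cases h₂ with
    | top => exact .top
    | all hT₁Q₁ hQ₂T₂ =>
      exact .all (htrans₁ hT₁Q₁ hQ₁S₁) (htrans₂ (hnarrow₁ (Δ := []) hS₂Q₂ hT₁Q₁) hQ₂T₂)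

theorem transAt (Q : FTy) : TransAt Q :=
  transAt_of_size_lt fun R _ => ⟨transAt R, narrowAt_of_transAt fun k => transAt (shiftUp k R)⟩
termination_by Q.size
decreasing_by
  · assumption
  · rwa [size_shiftUp]

theorem sub_trans {Γ : List FTy} {S Q T : FTy}
    (h₁ : Subty Γ S Q) (h₂ : Subty Γ Q T) : Subty Γ S T :=
  transAt Q h₁ h₂
end

section
/- (CR 1) Every reducible term is strongly normalizing: if Red M A, then SN M. -/
inductive Ty : Type
  | iota : Ty
  | arr : Ty → Ty → Ty

inductive Tm : Type
  | var : ℕ → Tm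
  | const : Tm
  | app : Tm → Tm → Tm
  | abs : Ty → Tm → Tm

def rename (ρ : ℕ → ℕ) : Tm → Tm
  | Tm.var n => Tm.var (ρ n)
  | Tm.const => Tm.const
  | Tm.app m n => Tm.app (rename ρ m) (rename ρ n)
  | Tm.abs a r => Tm.abs a (rename (liftRen ρ) r)

def liftSub (σ : ℕ → Tm) : ℕ → Tm
  | 0 => Tm.var 0
  | n + 1 => rename Nat.succ (σ n)

/-- Simultaneous capture-avoiding substitution. -/
def subst (σ : ℕ → Tm) : Tm → Tm
  | Tm.var n => σ n
  | Tm.const => Tm.const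
  | Tm.app m n => Tm.app (subst σ m) (subst σ n)
  | Tm.abs a r => Tm.abs a (subst (liftSub σ) r)

/-- `subst0 s t` is `t[0 := s]`. -/
def subst0 (s : Tm) (t : Tm) : Tm :=
  subst (fun n => match n with | 0 => s | Nat.succ k => Tm.var k) t

inductive Typed : List Ty → Tm → Ty → Prop
  | var {Γ : List Ty} {n : ℕ} {a : Ty} :
      Γ[n]? = some a → Typed Γ (Tm.var n) a
  | const {Γ : List Ty} {a : Ty} : Typed Γ Tm.const a
  | app {Γ : List Ty} {m n : Tm} {a b : Ty} :
      Typed Γ m (Ty.arr a b) → Typed Γ n a → Typed Γ (Tm.app m n) b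
  | abs {Γ : List Ty} {r : Tm} {a b : Ty} :
      Typed (a :: Γ) r b → Typed Γ (Tm.abs a r) (Ty.arr a b)

/-- One-step (β) reduction. -/
inductive Step : Tm → Tm → Prop
  | beta {a : Ty} {r m : Tm} : Step (Tm.app (Tm.abs a r) m) (subst0 m r)
  | appl {m m' n : Tm} : Step m m' → Step (Tm.app m n) (Tm.app m' n)
  | appr {m n n' : Tm} : Step n n' → Step (Tm.app m n) (Tm.app m n')
  | abs {a : Ty} {r r' : Tm} : Step r r' → Step (Tm.abs a r) (Tm.abs a r')

/-- Strong normalization. -/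
inductive SN : Tm → Prop
  | intro {M : Tm} : (∀ M', Step M M' → SN M') → SN M

/-- Tait-style reducibility, by recursion on the type. -/
def Red : Tm → Ty → Prop
  | M, Ty.iota => Typed [] M Ty.iota ∧ SN M
  | M, Ty.arr a b => Typed [] M (Ty.arr a b) ∧ ∀ U, Red U a → Red (Tm.app M U) b

/-!
(CR 1) cannot be proved by induction on the type alone: at `arr a b` one needs some reducible
argument of type `a` to apply `M` to. So (CR 1) is proved together with Girard's (CR 2), closure
of `Red · A` under reduction, and (CR 3), a neutral term all of whose reducts are reducible is
reducible. The constant is neutral and has no reducts, so (CR 3) makes it reducible at every type;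
at an arrow type (CR 3) itself follows by induction on the strong normalization of the argument.
-/

def Neutral : Tm → Prop
  | Tm.abs _ _ => False
  | _ => True

theorem Typed.rename {Γ Δ : List Ty} {ρ : ℕ → ℕ} {t : Tm} {a : Ty} (h : Typed Γ t a)
    (hρ : ∀ n b, Γ[n]? = some b → Δ[ρ n]? = some b) : Typed Δ (rename ρ t) a := by
  induction h generalizing Δ ρ with
  | var hn => exact Typed.var (hρ _ _ hn)
  | const => exact Typed.const
  | app _ _ ihm ihn => exact Typed.app (ihm hρ) (ihn hρ)
  | abs _ ih =>
    refine Typed.abs (ih fun n c hn => ?_)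
    cases n with
    | zero => simpa [liftRen] using hn
    | succ k => simpa [liftRen] using hρ k c (by simpa using hn)

theorem Typed.subst {Γ Δ : List Ty} {σ : ℕ → Tm} {t : Tm} {a : Ty} (h : Typed Γ t a)
    (hσ : ∀ n b, Γ[n]? = some b → Typed Δ (σ n) b) : Typed Δ (subst σ t) a := by
  induction h generalizing Δ σ with
  | var hn => exact hσ _ _ hn
  | const => exact Typed.const
  | app _ _ ihm ihn => exact Typed.app (ihm hσ) (ihn hσ)
  | abs _ ih =>
    refine Typed.abs (ih fun n c hn => ?_)
    cases n with
    | zero => exact Typed.var (by simpa using hn)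
    | succ k => exact (hσ k c (by simpa using hn)).rename fun n b hb => by simpa using hb

theorem Typed.subst0 {Γ : List Ty} {r m : Tm} {a b : Ty} (hr : Typed (a :: Γ) r b)
    (hm : Typed Γ m a) : Typed Γ (subst0 m r) b :=
  hr.subst fun n c hn => by
    cases n with
    | zero => cases hn; exact hm
    | succ k => exact Typed.var (by simpa using hn)

theorem Typed.of_step {Γ : List Ty} {t t' : Tm} {a : Ty} (ht : Typed Γ t a) (hs : Step t t') :
    Typed Γ t' a := by
  induction hs generalizing Γ a with
  | beta =>
    obtain _ | _ | ⟨hf, hm⟩ := ht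
    obtain _ | _ | _ | ⟨hr⟩ := hf
    exact hr.subst0 hm
  | appl _ ih =>
    obtain _ | _ | ⟨hm, hn⟩ := ht
    exact Typed.app (ih hm) hn
  | appr _ ih =>
    obtain _ | _ | ⟨hm, hn⟩ := ht
    exact Typed.app hm (ih hn)
  | abs _ ih =>
    obtain _ | _ | _ | ⟨hr⟩ := ht
    exact Typed.abs (ih hr)

theorem SN.of_step {M M' : Tm} (h : SN M) (hs : Step M M') : SN M' := by
  obtain ⟨h⟩ := h
  exact h _ hs

theorem SN.of_app_left {M N : Tm} (h : SN (Tm.app M N)) : SN M := by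
  generalize ht : Tm.app M N = t at h
  induction h generalizing M N with
  | intro _ ih =>
    subst ht
    exact SN.intro fun M' hs => ih _ (Step.appl hs) rfl

theorem Red.typed {M : Tm} {A : Ty} (h : Red M A) : Typed [] M A := by
  cases A <;> exact h.1

/-- Girard's conditions (CR 1)–(CR 3) on `Red · A`. -/
structure IsReducibilityCandidate (A : Ty) : Prop where
  sn : ∀ {M}, Red M A → SN M
  of_step : ∀ {M M'}, Red M A → Step M M' → Red M' A
  of_neutral : ∀ {M}, Neutral M → Typed [] M A → (∀ M', Step M M' → Red M' A) → Red M A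

namespace IsReducibilityCandidate

theorem iota : IsReducibilityCandidate Ty.iota where
  sn h := h.2
  of_step h hs := ⟨h.1.of_step hs, h.2.of_step hs⟩
  of_neutral _ ht hred := ⟨ht, SN.intro fun M' hs => (hred M' hs).2⟩

variable {a b : Ty}

theorem red_const (ha : IsReducibilityCandidate a) : Red Tm.const a :=
  ha.of_neutral trivial Typed.const fun _ hs => nomatch hs

theorem red_arr_of_neutral (ha : IsReducibilityCandidate a) (hb : IsReducibilityCandidate b)
    {M : Tm} (hne : Neutral M) (ht : Typed [] M (Ty.arr a b))
    (hred : ∀ M', Step M M' → Red M' (Ty.arr a b)) : Red M (Ty.arr a b) := by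
  refine ⟨ht, fun U hU => ?_⟩
  induction ha.sn hU with
  | @intro U _ ih =>
    refine hb.of_neutral trivial (Typed.app ht hU.typed) fun X hs => ?_
    cases hs with
    | beta => exact hne.elim
    | appl hM => exact (hred _ hM).2 U hU
    | appr hU' => exact ih _ hU' (ha.of_step hU hU')

theorem arr (ha : IsReducibilityCandidate a) (hb : IsReducibilityCandidate b) :
    IsReducibilityCandidate (Ty.arr a b) where
  sn h := (hb.sn (h.2 _ ha.red_const)).of_app_left
  of_step h hs := ⟨h.1.of_step hs, fun U hU => hb.of_step (h.2 U hU) (Step.appl hs)⟩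
  of_neutral := red_arr_of_neutral ha hb

end IsReducibilityCandidate

theorem isReducibilityCandidate : ∀ A : Ty, IsReducibilityCandidate A
  | Ty.iota => .iota
  | Ty.arr a b => .arr (isReducibilityCandidate a) (isReducibilityCandidate b)

theorem cr1 {M : Tm} {A : Ty} (h : Red M A) : SN M :=
  (isReducibilityCandidate A).sn h
end
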